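/- Define j₁(u,v) = 16v(vu² + 216u² - 126vu - 972u + 12v² + 405v)³/((v-27)³(4v² + 27v + 4u³ - 18vu - vu²)²) and j₂(u,v) = -256(u² - 3v)³/(v(4v² + 27v + 4u³ - 18vu - vu²)). Let β(u,v) be the involution with components u' = (v-3u)(324u²+15u²v-378uv-4uv²+243v+72v²)/((v-27)(4u³+27v-18uv-u²v+4v²)) and v' = -4(v-3u)³/(4u³+27v-18uv-u²v+4v²). Then j₂ = j₁ ∘ β as rational functions in u, v. -/

import Mathlib

/-!
With `D = disc u v`, `w = v - 3u` and `t = 9u - 2v - 27`, the substitution `β` turns the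
building blocks of `j₁` into monomials in `v, w, t, v - 27, D` and the single extra factor
`u² - 3v`: `v' = -4w³/D`, `v' - 27 = -v t²/D`, `disc u' v' = 4w³v²t⁶/((v - 27)³D³)` and
`j₁Factor u' v' = -4wt⁶(u² - 3v)v²/((v - 27)²D³)`. In `j₁ u' v'` all powers of `w`, `t` and
`v - 27` then cancel, leaving `-256(u² - 3v)³/(vD) = j₂ u v`.
-/

namespace BetaInvolution

variable {k : Type*} [Field k]

def disc (u v : k) : k := 4 * v ^ 2 + 27 * v + 4 * u ^ 3 - 18 * v * u - v * u ^ 2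

def j₁Factor (u v : k) : k :=
  v * u ^ 2 + 216 * u ^ 2 - 126 * v * u - 972 * u + 12 * v ^ 2 + 405 * v

def j₁ (u v : k) : k := 16 * v * j₁Factor u v ^ 3 / ((v - 27) ^ 3 * disc u v ^ 2)

def j₂ (u v : k) : k := -256 * (u ^ 2 - 3 * v) ^ 3 / (v * disc u v)

def betaU (u v : k) : k :=
  (v - 3 * u) *
      (324 * u ^ 2 + 15 * u ^ 2 * v - 378 * u * v - 4 * u * v ^ 2 + 243 * v + 72 * v ^ 2) /
    ((v - 27) * disc u v)

def betaV (u v : k) : k := -4 * (v - 3 * u) ^ 3 / disc u v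

theorem disc_eq (u v : k) : disc u v = 4 * u ^ 3 + 27 * v - 18 * u * v - u ^ 2 * v + 4 * v ^ 2 := by
  rw [disc]; ring

variable {u v : k}

theorem betaV_sub_27 (hD : disc u v ≠ 0) :
    betaV u v - 27 = -v * (9 * u - 2 * v - 27) ^ 2 / disc u v := by
  rw [betaV, div_sub' hD]
  congr 1
  rw [disc]; ring

theorem disc_beta (hv27 : v ≠ 27) (hD : disc u v ≠ 0) :
    disc (betaU u v) (betaV u v) =
      4 * (v - 3 * u) ^ 3 * v ^ 2 * (9 * u - 2 * v - 27) ^ 6 / ((v - 27) ^ 3 * disc u v ^ 3) := by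
  have h27 : v - 27 ≠ 0 := sub_ne_zero.mpr hv27
  rw [disc_eq (betaU u v), betaU, betaV]
  field_simp
  rw [disc]; ring

theorem j₁Factor_beta (hv27 : v ≠ 27) (hD : disc u v ≠ 0) :
    j₁Factor (betaU u v) (betaV u v) =
      -4 * (v - 3 * u) * (9 * u - 2 * v - 27) ^ 6 * (u ^ 2 - 3 * v) * v ^ 2 /
        ((v - 27) ^ 2 * disc u v ^ 3) := by
  have h27 : v - 27 ≠ 0 := sub_ne_zero.mpr hv27
  rw [j₁Factor, betaU, betaV]
  field_simp
  rw [disc]; ring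

theorem j₁_beta (hv27 : v ≠ 27) (hD : disc u v ≠ 0) (hv27' : betaV u v ≠ 27)
    (hD' : disc (betaU u v) (betaV u v) ≠ 0) : j₁ (betaU u v) (betaV u v) = j₂ u v := by
  have h27 : v - 27 ≠ 0 := sub_ne_zero.mpr hv27
  have hv'27 := betaV_sub_27 hD
  obtain ⟨hv, ht⟩ : v ≠ 0 ∧ 9 * u - 2 * v - 27 ≠ 0 := by
    have := sub_ne_zero.mpr hv27'
    rw [hv'27] at this
    simpa [hD] using this
  have hw : v - 3 * u ≠ 0 := by
    intro hw
    apply hD'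
    rw [disc_beta hv27 hD, hw]
    simp
  rw [j₁, j₂, disc_beta hv27 hD, j₁Factor_beta hv27 hD, hv'27, betaV]
  generalize 9 * u - 2 * v - 27 = t at ht ⊢
  generalize v - 3 * u = w at hw ⊢
  field_simp
  ring

end BetaInvolution

theorem j2_eq_j1_comp_beta {k : Type*} [Field k] (u v u' v' : k)
    (hv27 : v ≠ 27)
    (hD : 4 * u ^ 3 + 27 * v - 18 * u * v - u ^ 2 * v + 4 * v ^ 2 ≠ 0)
    (hu' : u' = (v - 3 * u) *
        (324 * u ^ 2 + 15 * u ^ 2 * v - 378 * u * v - 4 * u * v ^ 2 + 243 * v + 72 * v ^ 2) /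
        ((v - 27) * (4 * u ^ 3 + 27 * v - 18 * u * v - u ^ 2 * v + 4 * v ^ 2)))
    (hv' : v' = -4 * (v - 3 * u) ^ 3 /
        (4 * u ^ 3 + 27 * v - 18 * u * v - u ^ 2 * v + 4 * v ^ 2))
    (hv27' : v' ≠ 27)
    (hD' : 4 * v' ^ 2 + 27 * v' + 4 * u' ^ 3 - 18 * v' * u' - v' * u' ^ 2 ≠ 0) :
    -256 * (u ^ 2 - 3 * v) ^ 3 /
        (v * (4 * v ^ 2 + 27 * v + 4 * u ^ 3 - 18 * v * u - v * u ^ 2)) =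
      16 * v' * (v' * u' ^ 2 + 216 * u' ^ 2 - 126 * v' * u' - 972 * u' + 12 * v' ^ 2 +
          405 * v') ^ 3 /
        ((v' - 27) ^ 3 *
          (4 * v' ^ 2 + 27 * v' + 4 * u' ^ 3 - 18 * v' * u' - v' * u' ^ 2) ^ 2) := by
  rw [← BetaInvolution.disc_eq] at hD hu' hv'
  subst hu' hv'
  exact (BetaInvolution.j₁_beta hv27 hD hv27' hD').symm
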